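/- arXiv:1903.02028 — 4 statements merged into one kernel-verified Lean document; each statement's English description precedes it below -/
import Mathlib

section
/- Every countable linear order admits an order embedding into Lex(ℕ → Bool), the lexicographic order on infinite binary sequences. (Cantor's universality theorem: the first-difference order on countable binary sequences is universal for countable total orders.) -/
/-- **Cantor's universality theorem.** Every countable linear order admits an
order embedding into `Lex (ℕ → Bool)`, the lexicographic (first-difference)
order on infinite binary sequences. -/
theorem cantor_universal_countable_linear_order
    (α : Type*) [LinearOrder α] [Countable α] :
    Nonempty (α ↪o Lex (ℕ → Bool)) := by
  rcases isEmpty_or_nonempty α with h | h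
  · exact ⟨OrderEmbedding.ofIsEmpty⟩
  · obtain ⟨e, he⟩ := exists_surjective_nat α
    refine ⟨OrderEmbedding.ofStrictMono
      (fun x => toLex fun n => decide (e n < x)) ?_⟩
    intro x y hxy
    have hdiff : ∃ n, decide (e n < x) ≠ decide (e n < y) := by
      obtain ⟨n, hn⟩ := he x
      exact ⟨n, by simp [hn, hxy, lt_irrefl]⟩
    classical
    refine ⟨Nat.find hdiff, fun j hj => not_not.mp (Nat.find_min hdiff hj), ?_⟩
    have hi := Nat.find_spec hdiff
    have hle : ∀ n, decide (e n < x) ≤ decide (e n < y) := by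
      intro n
      by_cases hx : e n < x
      · simp [hx, hx.trans hxy]
      · simp [hx]
    exact lt_of_le_of_ne (hle _) hi
end

section
/- For every nonempty linear order α there exist a well-ordered linear order ι with cardinality at most the cardinality of α and an order embedding of α into Lex(ι → Bool). (Hausdorff 1907, Sierpiński 1932: every total order has a strict binary questionable representation whose length is at most the initial ordinal of its cardinality.) -/
universe u

/-- Type synonym of `α` carrying a well-order. -/
structure HSCopy (α : Type u) : Type u where
  out : α

noncomputable instance HSCopy.linearOrder (α : Type u) : LinearOrder (HSCopy α) :=
  @linearOrderOfSTO _ (WellOrderingRel : HSCopy α → HSCopy α → Prop)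
    inferInstance (Classical.decRel _)

theorem HSCopy.lt_iff {α : Type u} {x y : HSCopy α} :
    x < y ↔ WellOrderingRel x y := Iff.rfl

instance HSCopy.wellFoundedLT (α : Type u) : WellFoundedLT (HSCopy α) :=
  ⟨(WellOrderingRel.isWellOrder (α := HSCopy α)).wf⟩

/-- **Hausdorff 1907, Sierpiński 1932.** Every nonempty linear order `α` has a strict
binary questionable representation whose length is at most the initial ordinal of the
cardinality of `α`: there exist a well-ordered linear order `ι` with `#ι ≤ #α` and an
order embedding of `α` into `Lex (ι → Bool)`, the lexicographic (first-difference)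
order on binary sequences indexed by `ι`. -/
theorem exists_wellOrdered_binary_questionable_representation
    (α : Type u) [LinearOrder α] [Nonempty α] :
    ∃ (ι : Type u) (_ : LinearOrder ι) (_ : WellFoundedLT ι),
      Cardinal.mk ι ≤ Cardinal.mk α ∧ Nonempty (α ↪o Lex (ι → Bool)) := by
  classical
  have hcard : Cardinal.mk (HSCopy α) ≤ Cardinal.mk α :=
    Cardinal.mk_le_of_injective (f := HSCopy.out) (fun x y h => by cases x; cases y; simpa using h)
  refine ⟨HSCopy α, inferInstance, inferInstance, hcard, ?_⟩
  -- the embedding `a ↦ (i ↦ decide (i.out ≤ a))`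
  set f : α → Lex (HSCopy α → Bool) := fun a => toLex (fun i => decide (i.out ≤ a)) with hf
  have hmono : StrictMono f := by
    intro a b hab
    have hS : (⟨b⟩ : HSCopy α) ∈ {i : HSCopy α | a < i.out ∧ i.out ≤ b} :=
      ⟨hab, le_refl _⟩
    obtain ⟨i, ⟨hai, hib⟩, hmin⟩ :=
      (HSCopy.wellFoundedLT α).wf.has_min {i : HSCopy α | a < i.out ∧ i.out ≤ b} ⟨_, hS⟩
    refine ⟨i, ?_, ?_⟩
    · intro j hj
      have hjS : ¬ (a < j.out ∧ j.out ≤ b) := fun h => hmin j h hj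
      show decide (j.out ≤ a) = decide (j.out ≤ b)
      by_cases hja : j.out ≤ a
      · simp [hja, hja.trans hab.le]
      · have : ¬ j.out ≤ b := fun hjb => hjS ⟨lt_of_not_ge hja, hjb⟩
        simp [hja, this]
    · show decide (i.out ≤ a) < decide (i.out ≤ b)
      simp [not_le.2 hai, hib]
  exact ⟨OrderEmbedding.ofStrictMono f hmono⟩
end

section
/- Let P be a partial order with property (itov) such that the neighbourhood order on P has no infinite strictly decreasing sequence. Then P admits a total binary questionable representation: there exist a well-ordered index type ι and an injection w from P to functions ι → Option Bool whose supports {i | w(x) i ≠ none} are downward closed, such that for all x, y: x < y iff there is an index i with w(x) i = some false, w(y) i = some true, and w(x) j = w(y) j for all j < i; and x and y are incomparable iff x ≠ y and w(x), w(y) agree at every index where both are defined (one word is a prefix of the other). -/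
universe u

variable {P : Type u} [PartialOrder P]

/-- Two elements of a partial order are incomparable if neither is `≤` the other. -/
def Incomp (x y : P) : Prop := x ≠ y ∧ ¬x ≤ y ∧ ¬y ≤ x

/-- Four elements realize the pattern of `O_obs1` ('2+2'). -/
def Obs1At (a b c d : P) : Prop :=
  a < b ∧ c < d ∧ Incomp a c ∧ Incomp a d ∧ Incomp b c ∧ Incomp b d

/-- Four elements realize the pattern of `O_obs2` ('N'). -/
def Obs2At (a b c d : P) : Prop :=
  a < b ∧ c < d ∧ c < b ∧ Incomp a c ∧ Incomp a d ∧ Incomp b d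

/-- Property (itov): `P` is a series parallel interval order, i.e. it has no induced
suborder isomorphic to `O_obs1` nor to `O_obs2`. -/
def Itov (P : Type u) [PartialOrder P] : Prop :=
  (¬∃ a b c d : P, Obs1At a b c d) ∧ (¬∃ a b c d : P, Obs2At a b c d)

/-- The (strict) neighbourhood order: `x <_N y` iff the sets of elements below
(resp. above) `x` are included in those of `y`, at least one inclusion being strict. -/
def NeighLT (x y : P) : Prop :=
  ({z : P | z < x} ⊆ {z : P | z < y} ∧ {z : P | x < z} ⊆ {z : P | y < z}) ∧
    ({z : P | z < x} ⊂ {z : P | z < y} ∨ {z : P | x < z} ⊂ {z : P | y < z})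

set_option linter.unusedSectionVars false

namespace ItovProof

lemma incomp_of {x y : P} (h3 : x ≠ y) (h1 : ¬x < y) (h2 : ¬y < x) : Incomp x y :=
  ⟨h3, fun h => h1 (lt_of_le_of_ne h h3), fun h => h2 (lt_of_le_of_ne h h3.symm)⟩

lemma isymm {x y : P} (h : Incomp x y) : Incomp y x := ⟨h.1.symm, h.2.2, h.2.1⟩

lemma inot_lt {x y : P} (h : Incomp x y) : ¬ x < y := fun hl => h.2.1 hl.le

lemma inot_gt {x y : P} (h : Incomp x y) : ¬ y < x := fun hl => h.2.2 hl.le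

/-- Claim A: in an itov poset, incomparable elements have nested neighbourhoods. -/
lemma claimA (hitov : Itov P) {x y : P} (h : Incomp x y) :
    ((∀ z, z < x → z < y) ∧ (∀ z, x < z → y < z)) ∨
    ((∀ z, z < y → z < x) ∧ (∀ z, y < z → x < z)) := by
  have hlt : ¬ x < y := inot_lt h
  have hlt' : ¬ y < x := inot_gt h
  by_cases hD : ∀ z, z < x → z < y
  · by_cases hU : ∀ z, x < z → y < z
    · exact Or.inl ⟨hD, hU⟩
    · right
      push_neg at hU
      obtain ⟨b, hxb, hyb⟩ := hU
      have hby : ¬ b < y := fun hh => hlt (hxb.trans hh)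
      have hbney : b ≠ y := fun hh => hlt (hh ▸ hxb)
      have hincyb : Incomp y b := incomp_of hbney.symm hyb hby
      constructor
      · intro z hzy
        by_contra hzx
        have hxz : ¬ x < z := fun hh => hlt (hh.trans hzy)
        have hznex : z ≠ x := fun hh => hlt (hh ▸ hzy)
        have hincxz : Incomp x z := incomp_of hznex.symm hxz hzx
        have hbz : ¬ b < z := fun hh => hby (hh.trans hzy)
        by_cases hzb : z < b
        · exact hitov.2 ⟨x, b, z, y, hxb, hzy, hzb, hincxz, h, isymm hincyb⟩
        · have hzneb : z ≠ b := fun hh => hby (hh ▸ hzy)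
          have hinczb : Incomp z b := incomp_of hzneb hzb hbz
          exact hitov.1 ⟨z, y, x, b, hzy, hxb, isymm hincxz, hinczb, isymm h, hincyb⟩
      · intro z hyz
        by_contra hxz
        have hzx : ¬ z < x := fun hh => hlt' (hyz.trans hh)
        have hznex : z ≠ x := fun hh => hlt' (hh ▸ hyz)
        have hincxz : Incomp x z := incomp_of hznex.symm hxz hzx
        have hbz : ¬ b < z := fun hh => hxz (hxb.trans hh)
        have hzb : ¬ z < b := fun hh => hyb (hyz.trans hh)
        have hzneb : z ≠ b := fun hh => hyb (hh ▸ hyz)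
        have hincbz : Incomp b z := incomp_of hzneb.symm hbz hzb
        exact hitov.1 ⟨x, b, y, z, hxb, hyz, h, hincxz, isymm hincyb, hincbz⟩
  · right
    push_neg at hD
    obtain ⟨a, hax, hay⟩ := hD
    have hya : ¬ y < a := fun hh => hlt' (hh.trans hax)
    have haney : a ≠ y := fun hh => hlt' (hh ▸ hax)
    have hincya : Incomp y a := incomp_of haney.symm hya hay
    constructor
    · intro z hzy
      by_contra hzx
      have haz : ¬ a < z := fun hh => hay (hh.trans hzy)
      have hza : ¬ z < a := fun hh => hzx (hh.trans hax)
      have hanez : a ≠ z := fun hh => hay (hh ▸ hzy)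
      have hincaz : Incomp a z := incomp_of hanez haz hza
      have hxz : ¬ x < z := fun hh => hlt (hh.trans hzy)
      have hznex : z ≠ x := fun hh => hlt (hh ▸ hzy)
      have hincxz : Incomp x z := incomp_of hznex.symm hxz hzx
      exact hitov.1 ⟨a, x, z, y, hax, hzy, hincaz, isymm hincya, hincxz, h⟩
    · intro z hyz
      by_contra hxz
      have hzx : ¬ z < x := fun hh => hlt' (hyz.trans hh)
      have hznex : z ≠ x := fun hh => hlt' (hh ▸ hyz)
      have hincxz : Incomp x z := incomp_of hznex.symm hxz hzx
      have hza : ¬ z < a := fun hh => hlt' ((hyz.trans hh).trans hax)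
      have hznea : z ≠ a := fun hh => hya (hh ▸ hyz)
      by_cases haz : a < z
      · exact hitov.2 ⟨y, z, a, x, hyz, hax, haz, hincya, isymm h, isymm hincxz⟩
      · have hincaz : Incomp a z := incomp_of hznea.symm haz hza
        exact hitov.1 ⟨a, x, y, z, hax, hyz, isymm hincya, hincaz, h, hincxz⟩

/-- Specification of a decomposition of a set `S`. -/
structure DS (S : Set P) (d : Option P × Set P × Set P) : Prop where
  subA : d.2.1 ⊆ S
  subB : d.2.2 ⊆ S
  lt_of : ∀ a ∈ d.2.1, ∀ b ∈ d.2.2, a < b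
  cover : ∀ x ∈ S, x ∈ d.2.1 ∨ x ∈ d.2.2 ∨ d.1 = some x
  wild : ∀ x, d.1 = some x → x ∈ S ∧ x ∉ d.2.1 ∧ x ∉ d.2.2 ∧ ∀ z ∈ S, z ≠ x → Incomp x z
  nonE : d.1 = none → d.2.1.Nonempty ∧ d.2.2.Nonempty

lemma DS.notMem_B {S : Set P} {d} (h : DS S d) {a : P} (ha : a ∈ d.2.1) : a ∉ d.2.2 :=
  fun hb => lt_irrefl a (h.lt_of a ha a hb)

lemma exists_min (hwf : ¬∃ f : ℕ → P, ∀ n, NeighLT (f (n + 1)) (f n))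
    (S : Set P) (hne : S.Nonempty) : ∃ m ∈ S, ∀ x ∈ S, ¬NeighLT x m := by
  by_contra hc
  push_neg at hc
  obtain ⟨m0, hm0⟩ := hne
  choose g hg1 hg2 using hc
  let f : ℕ → {a // a ∈ S} := fun n => Nat.rec ⟨m0, hm0⟩ (fun _ p => ⟨g p.1 p.2, hg1 p.1 p.2⟩) n
  exact hwf ⟨fun n => (f n).1, fun n => hg2 (f n).1 (f n).2⟩

lemma exists_dec (hitov : Itov P) (hwf : ¬∃ f : ℕ → P, ∀ n, NeighLT (f (n + 1)) (f n))
    (S : Set P) (hne : S.Nonempty) : ∃ d, DS S d := by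
  obtain ⟨m, hmS, hmin⟩ := exists_min hwf S hne
  by_cases h1 : ∃ t ∈ S, m < t
  · obtain ⟨t, htS, hmt⟩ := h1
    refine ⟨(none, S \ {z ∈ S | m < z}, {z ∈ S | m < z}), ?_, ?_, ?_, ?_, ?_, ?_⟩
    · exact Set.diff_subset
    · exact Set.sep_subset _ _
    · rintro a ⟨haS, haB⟩ b ⟨hbS, hmb⟩
      by_cases ham : a = m
      · exact ham ▸ hmb
      by_cases halt : a < m
      · exact halt.trans hmb
      have hma : ¬ m < a := fun hh => haB ⟨haS, hh⟩
      have hinc : Incomp a m := incomp_of ham halt hma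
      rcases claimA hitov hinc with ⟨hDa, hUa⟩ | ⟨hDa, hUa⟩
      · by_cases heq : {z : P | m < z} ⊆ {z : P | a < z}
        · exact heq hmb
        · exact absurd ⟨⟨fun z hz => hDa z hz, fun z hz => hUa z hz⟩,
            Or.inr ⟨fun z hz => hUa z hz, heq⟩⟩ (hmin a haS)
      · exact hUa b hmb
    · intro x hx
      by_cases hmx : m < x
      · exact Or.inr (Or.inl ⟨hx, hmx⟩)
      · exact Or.inl ⟨hx, fun hh => hmx hh.2⟩
    · intro x hx; cases hx
    · intro _
      exact ⟨⟨m, hmS, fun hh => lt_irrefl m hh.2⟩, ⟨t, htS, hmt⟩⟩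
  · by_cases h2 : ∃ t ∈ S, t < m
    · obtain ⟨t, htS, htm⟩ := h2
      refine ⟨(none, {z ∈ S | z < m}, S \ {z ∈ S | z < m}), ?_, ?_, ?_, ?_, ?_, ?_⟩
      · exact Set.sep_subset _ _
      · exact Set.diff_subset
      · rintro a ⟨haS, ham⟩ b ⟨hbS, hbA⟩
        by_cases hbm : b = m
        · exact hbm ▸ ham
        have h3 : ¬ b < m := fun hh => hbA ⟨hbS, hh⟩
        have h4 : ¬ m < b := fun hh => h1 ⟨b, hbS, hh⟩
        have hinc : Incomp b m := incomp_of hbm h3 h4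
        rcases claimA hitov hinc with ⟨hDb, hUb⟩ | ⟨hDb, hUb⟩
        · by_cases heq : {z : P | z < m} ⊆ {z : P | z < b}
          · exact heq ham
          · exact absurd ⟨⟨fun z hz => hDb z hz, fun z hz => hUb z hz⟩,
              Or.inl ⟨fun z hz => hDb z hz, heq⟩⟩ (hmin b hbS)
        · exact hDb a ham
      · intro x hx
        by_cases hxm : x < m
        · exact Or.inl ⟨hx, hxm⟩
        · exact Or.inr (Or.inl ⟨hx, fun hh => hxm hh.2⟩)
      · intro x hx; cases hx
      · intro _
        exact ⟨⟨t, htS, htm⟩, ⟨m, hmS, fun hh => lt_irrefl m hh.2⟩⟩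
    · refine ⟨(some m, S \ {m}, ∅), ?_, ?_, ?_, ?_, ?_, ?_⟩
      · exact Set.diff_subset
      · exact Set.empty_subset _
      · intro a _ b hb; cases hb
      · intro x hx
        by_cases hxm : x = m
        · exact Or.inr (Or.inr (by rw [hxm]))
        · exact Or.inl ⟨hx, hxm⟩
      · intro x hx
        have hmx : m = x := by injection hx
        subst hmx
        refine ⟨hmS, by simp, by simp, fun z hzS hzm => ?_⟩
        exact incomp_of (Ne.symm hzm) (fun hh => h1 ⟨z, hzS, hh⟩) (fun hh => h2 ⟨z, hzS, hh⟩)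
      · intro hh; cases hh

section Rec

variable (dec : Set P → Option P × Set P × Set P)

open scoped Classical in
/-- The part of the decomposition of `S` that `x` belongs to. -/
noncomputable def childD (S : Set P) (x : P) : Set P :=
  if x ∈ (dec S).2.1 then (dec S).2.1 else if x ∈ (dec S).2.2 then (dec S).2.2 else ∅

open scoped Classical in
/-- The letter of `x` at the node `S`. -/
noncomputable def valD (S : Set P) (x : P) : Option Bool :=
  if x ∈ (dec S).2.1 then some false else if x ∈ (dec S).2.2 then some true else none

lemma valD_false_iff {S : Set P} {x : P} :
    valD dec S x = some false ↔ x ∈ (dec S).2.1 := by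
  unfold valD; split_ifs <;> simp_all

lemma valD_true_iff {S : Set P} {x : P} :
    valD dec S x = some true ↔ x ∉ (dec S).2.1 ∧ x ∈ (dec S).2.2 := by
  unfold valD; split_ifs <;> simp_all

lemma valD_none_iff {S : Set P} {x : P} :
    valD dec S x = none ↔ x ∉ (dec S).2.1 ∧ x ∉ (dec S).2.2 := by
  unfold valD; split_ifs <;> simp_all

lemma childD_subset (hsub : ∀ S : Set P, (dec S).2.1 ⊆ S ∧ (dec S).2.2 ⊆ S)
    {S : Set P} {x : P} : childD dec S x ⊆ S := by
  unfold childD; split_ifs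
  · exact (hsub S).1
  · exact (hsub S).2
  · exact Set.empty_subset _

lemma mem_childD_or (S : Set P) (x : P) : x ∈ childD dec S x ∨ childD dec S x = ∅ := by
  unfold childD; split_ifs with h1 h2
  · exact Or.inl h1
  · exact Or.inl h2
  · exact Or.inr rfl

lemma childD_congr {S : Set P} {x y : P} (h : valD dec S x = valD dec S y) :
    childD dec S x = childD dec S y := by
  unfold valD at h; unfold childD
  split_ifs at h ⊢ <;> simp_all

variable {ι : Type u} [LinearOrder ι] [WellFoundedLT ι]

/-- The node containing `x` at stage `i`. -/
noncomputable def NodeD : ι → P → Set P :=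
  WellFoundedLT.fix fun i rec x => ⋂ (j : ι), ⋂ (h : j < i), childD dec (rec j h x) x

lemma NodeD_eq (i : ι) (x : P) :
    NodeD dec i x = ⋂ (j : ι), ⋂ (_ : j < i), childD dec (NodeD dec j x) x := by
  have h := WellFoundedLT.fix_eq
    (fun (i : ι) (rec : ∀ j : ι, j < i → P → Set P) (x : P) =>
      ⋂ (j : ι), ⋂ (h : j < i), childD dec (rec j h x) x) i
  exact congrFun h x

lemma nodeD_subset_child {i j : ι} (h : j < i) (x : P) :
    NodeD dec i x ⊆ childD dec (NodeD dec j x) x := by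
  intro t ht
  rw [NodeD_eq] at ht
  simp only [Set.mem_iInter] at ht
  exact ht j h

lemma nodeD_subset (hsub : ∀ S : Set P, (dec S).2.1 ⊆ S ∧ (dec S).2.2 ⊆ S)
    {i j : ι} (h : j < i) (x : P) : NodeD dec i x ⊆ NodeD dec j x :=
  (nodeD_subset_child dec h x).trans (childD_subset dec hsub)

lemma mem_nodeD_or (i : ι) (x : P) : x ∈ NodeD dec i x ∨ NodeD dec i x = ∅ := by
  by_cases hall : ∀ j < i, x ∈ childD dec (NodeD dec j x) x
  · left
    rw [NodeD_eq]
    simp only [Set.mem_iInter]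
    exact hall
  · right
    push_neg at hall
    obtain ⟨j, hj, hx⟩ := hall
    have hemp : childD dec (NodeD dec j x) x = ∅ :=
      (mem_childD_or dec (NodeD dec j x) x).resolve_left hx
    exact Set.subset_empty_iff.mp (hemp ▸ nodeD_subset_child dec hj x)

lemma nodeD_congr (x y : P) : ∀ i : ι,
    (∀ j < i, valD dec (NodeD dec j x) x = valD dec (NodeD dec j y) y) →
    NodeD dec i x = NodeD dec i y := by
  intro i
  induction i using WellFoundedLT.induction with
  | ind i IH =>
    intro hpre
    rw [NodeD_eq, NodeD_eq]
    refine Set.iInter_congr fun j => Set.iInter_congr fun hj => ?_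
    have hNj : NodeD dec j x = NodeD dec j y := IH j hj fun k hk => hpre k (hk.trans hj)
    have h1 := hpre j hj
    rw [hNj] at h1 ⊢
    exact childD_congr dec h1

lemma valD_empty (hsub : ∀ S : Set P, (dec S).2.1 ⊆ S ∧ (dec S).2.2 ⊆ S) (t : P) :
    valD dec ∅ t = none :=
  (valD_none_iff dec).mpr ⟨fun h => absurd ((hsub ∅).1 h) (Set.notMem_empty t),
    fun h => absurd ((hsub ∅).2 h) (Set.notMem_empty t)⟩

lemma mem_childD {S : Set P} {x : P} (h : x ∈ (dec S).2.1 ∨ x ∈ (dec S).2.2) :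
    x ∈ childD dec S x := by
  unfold childD; split_ifs <;> tauto

lemma valD_ne_none {S : Set P} {x : P} (h : valD dec S x ≠ none) :
    x ∈ (dec S).2.1 ∨ x ∈ (dec S).2.2 := by
  unfold valD at h; split_ifs at h <;> tauto

variable {ι : Type u} [LinearOrder ι] [WellFoundedLT ι]

lemma exists_diff (hdec : ∀ S : Set P, S.Nonempty → DS S (dec S))
    (hsub : ∀ S : Set P, (dec S).2.1 ⊆ S ∧ (dec S).2.2 ⊆ S)
    (hcard : ∀ F : ι → Set P, ¬ Function.Injective F)
    {x y : P} (hxy : x ≠ y) :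
    ∃ i : ι, valD dec (NodeD dec i x) x ≠ valD dec (NodeD dec i y) y := by
  by_contra hc
  push_neg at hc
  have hN : ∀ i : ι, NodeD dec i x = NodeD dec i y := fun i => nodeD_congr dec x y i fun j _ => hc j
  have key : ∀ S : Set P, x ∈ S → y ∈ S → valD dec S x = valD dec S y →
      (x ∈ (dec S).2.1 ∨ x ∈ (dec S).2.2) ∧ (y ∈ (dec S).2.1 ∨ y ∈ (dec S).2.2) := by
    intro S hxS hyS hvv
    have spec := hdec S ⟨x, hxS⟩
    by_cases hxn : valD dec S x = none
    · exfalso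
      obtain ⟨hxA, hxB⟩ := (valD_none_iff dec).mp hxn
      obtain ⟨hyA, hyB⟩ := (valD_none_iff dec).mp (hvv ▸ hxn)
      rcases spec.cover x hxS with h | h | h
      · exact hxA h
      · exact hxB h
      · rcases spec.cover y hyS with h' | h' | h'
        · exact hyA h'
        · exact hyB h'
        · rw [h] at h'
          exact hxy (by injection h')
    · exact ⟨valD_ne_none dec hxn, valD_ne_none dec (fun hh => hxn (hvv.trans hh))⟩
  have hmem : ∀ i : ι, x ∈ NodeD dec i x ∧ y ∈ NodeD dec i x := by
    intro i
    induction i using WellFoundedLT.induction with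
    | ind i IH =>
      have hstep : ∀ j < i, x ∈ childD dec (NodeD dec j x) x ∧
          y ∈ childD dec (NodeD dec j y) y := by
        intro j hj
        obtain ⟨hxj, hyj⟩ := IH j hj
        have hvv : valD dec (NodeD dec j x) x = valD dec (NodeD dec j x) y := by
          have h0 := hc j
          rw [← hN j] at h0
          exact h0
        obtain ⟨hx', hy'⟩ := key (NodeD dec j x) hxj hyj hvv
        refine ⟨mem_childD dec hx', ?_⟩
        rw [← hN j]
        -- y ∈ childD dec (NodeD dec j x) y
        exact mem_childD dec hy'
      constructor
      · rw [NodeD_eq]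
        simp only [Set.mem_iInter]
        intro j hj
        exact (hstep j hj).1
      · rw [hN i, NodeD_eq]
        simp only [Set.mem_iInter]
        intro j hj
        exact (hstep j hj).2
  have hproper : ∀ {j i : ι}, j < i → NodeD dec i x ≠ NodeD dec j x := by
    intro j i hj heq
    have hxS : x ∈ NodeD dec j x := (hmem j).1
    have hyS : y ∈ NodeD dec j x := (hmem j).2
    have spec := hdec (NodeD dec j x) ⟨x, hxS⟩
    have hvv : valD dec (NodeD dec j x) x = valD dec (NodeD dec j x) y := by
      have h0 := hc j
      rw [← hN j] at h0
      exact h0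
    obtain ⟨hx', _⟩ := key (NodeD dec j x) hxS hyS hvv
    have hsnc : ∃ s ∈ NodeD dec j x, s ∉ childD dec (NodeD dec j x) x := by
      rcases hx' with hxA | hxB
      · have hch : childD dec (NodeD dec j x) x = (dec (NodeD dec j x)).2.1 := by
          unfold childD
          rw [if_pos hxA]
        cases hcs : (dec (NodeD dec j x)).1 with
        | some c0 =>
          obtain ⟨hc0S, hc0A, _, _⟩ := spec.wild c0 hcs
          exact ⟨c0, hc0S, by rw [hch]; exact hc0A⟩
        | none =>
          obtain ⟨_, hB⟩ := spec.nonE hcs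
          obtain ⟨b, hb⟩ := hB
          exact ⟨b, spec.subB hb, by rw [hch]; exact fun hbA => spec.notMem_B hbA hb⟩
      · have hxA' : x ∉ (dec (NodeD dec j x)).2.1 := fun h => spec.notMem_B h hxB
        have hch : childD dec (NodeD dec j x) x = (dec (NodeD dec j x)).2.2 := by
          unfold childD
          rw [if_neg hxA', if_pos hxB]
        cases hcs : (dec (NodeD dec j x)).1 with
        | some c0 =>
          obtain ⟨hc0S, _, hc0B, _⟩ := spec.wild c0 hcs
          exact ⟨c0, hc0S, by rw [hch]; exact hc0B⟩
        | none =>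
          obtain ⟨hA, _⟩ := spec.nonE hcs
          obtain ⟨a, ha⟩ := hA
          exact ⟨a, spec.subA ha, by rw [hch]; exact fun haB => spec.notMem_B ha haB⟩
    obtain ⟨s, hsS, hsnc⟩ := hsnc
    rw [← heq] at hsS
    exact hsnc (nodeD_subset_child dec hj x hsS)
  apply hcard fun i => NodeD dec i x
  intro i j hij
  rcases lt_trichotomy i j with h | h | h
  · exact absurd hij.symm (hproper h)
  · exact h
  · exact absurd hij (hproper h)

lemma atFirstDiff (hdec : ∀ S : Set P, S.Nonempty → DS S (dec S))
    (hsub : ∀ S : Set P, (dec S).2.1 ⊆ S ∧ (dec S).2.2 ⊆ S)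
    (hcard : ∀ F : ι → Set P, ¬ Function.Injective F)
    {x y : P} (hxy : x ≠ y) :
    ∃ i : ι, (∀ j < i, valD dec (NodeD dec j x) x = valD dec (NodeD dec j y) y) ∧
      ((valD dec (NodeD dec i x) x = some false ∧ valD dec (NodeD dec i y) y = some true ∧ x < y) ∨
       (valD dec (NodeD dec i x) x = some true ∧ valD dec (NodeD dec i y) y = some false ∧ y < x) ∨
       ((valD dec (NodeD dec i x) x = none ∨ valD dec (NodeD dec i y) y = none) ∧
         valD dec (NodeD dec i x) x ≠ valD dec (NodeD dec i y) y ∧ Incomp x y)) := by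
  obtain ⟨i0, hi0, hmin⟩ := (IsWellFounded.wf (r := ((· < ·) : ι → ι → Prop))).has_min
    {i : ι | valD dec (NodeD dec i x) x ≠ valD dec (NodeD dec i y) y}
    (exists_diff dec hdec hsub hcard hxy)
  have hpre : ∀ j < i0, valD dec (NodeD dec j x) x = valD dec (NodeD dec j y) y := by
    intro j hj
    by_contra hne
    exact hmin j hne hj
  have hNi : NodeD dec i0 x = NodeD dec i0 y := nodeD_congr dec x y i0 hpre
  have hxS : x ∈ NodeD dec i0 x := by
    rcases mem_nodeD_or dec i0 x with h | h
    · exact h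
    · exfalso
      apply hi0
      have h2 : NodeD dec i0 y = ∅ := by rw [← hNi]; exact h
      rw [h, h2, valD_empty dec hsub, valD_empty dec hsub]
  have hyS : y ∈ NodeD dec i0 x := by
    rcases mem_nodeD_or dec i0 y with h | h
    · rw [hNi]; exact h
    · exfalso
      rw [hNi, h] at hxS
      exact Set.notMem_empty x hxS
  have spec := hdec (NodeD dec i0 x) ⟨x, hxS⟩
  refine ⟨i0, hpre, ?_⟩
  rw [← hNi]
  rcases spec.cover x hxS with hxA | hxB | hxc <;> rcases spec.cover y hyS with hyA | hyB | hyc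
  · exact absurd (by rw [← hNi]; rw [(valD_false_iff dec).mpr hxA, (valD_false_iff dec).mpr hyA]) hi0
  · exact Or.inl ⟨(valD_false_iff dec).mpr hxA,
      (valD_true_iff dec).mpr ⟨fun h => spec.notMem_B h hyB, hyB⟩, spec.lt_of x hxA y hyB⟩
  · obtain ⟨_, hyA', hyB', hincy⟩ := spec.wild y hyc
    refine Or.inr (Or.inr ⟨Or.inr ((valD_none_iff dec).mpr ⟨hyA', hyB'⟩), ?_, ?_⟩)
    · rw [(valD_false_iff dec).mpr hxA, (valD_none_iff dec).mpr ⟨hyA', hyB'⟩]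
      simp
    · exact isymm (hincy x hxS hxy)
  · exact Or.inr (Or.inl ⟨(valD_true_iff dec).mpr ⟨fun h => spec.notMem_B h hxB, hxB⟩,
      (valD_false_iff dec).mpr hyA, spec.lt_of y hyA x hxB⟩)
  · exact absurd (by rw [← hNi]; rw [(valD_true_iff dec).mpr ⟨fun h => spec.notMem_B h hxB, hxB⟩,
      (valD_true_iff dec).mpr ⟨fun h => spec.notMem_B h hyB, hyB⟩]) hi0
  · obtain ⟨_, hyA', hyB', hincy⟩ := spec.wild y hyc
    refine Or.inr (Or.inr ⟨Or.inr ((valD_none_iff dec).mpr ⟨hyA', hyB'⟩), ?_, ?_⟩)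
    · rw [(valD_true_iff dec).mpr ⟨fun h => spec.notMem_B h hxB, hxB⟩,
        (valD_none_iff dec).mpr ⟨hyA', hyB'⟩]
      simp
    · exact isymm (hincy x hxS hxy)
  · obtain ⟨_, hxA', hxB', hincx⟩ := spec.wild x hxc
    refine Or.inr (Or.inr ⟨Or.inl ((valD_none_iff dec).mpr ⟨hxA', hxB'⟩), ?_, ?_⟩)
    · rw [(valD_none_iff dec).mpr ⟨hxA', hxB'⟩, (valD_false_iff dec).mpr hyA]
      simp
    · exact hincx y hyS (Ne.symm hxy)
  · obtain ⟨_, hxA', hxB', hincx⟩ := spec.wild x hxc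
    refine Or.inr (Or.inr ⟨Or.inl ((valD_none_iff dec).mpr ⟨hxA', hxB'⟩), ?_, ?_⟩)
    · rw [(valD_none_iff dec).mpr ⟨hxA', hxB'⟩,
        (valD_true_iff dec).mpr ⟨fun h => spec.notMem_B h hyB, hyB⟩]
      simp
    · exact hincx y hyS (Ne.symm hxy)
  · rw [hxc] at hyc
    exact absurd (by injection hyc) hxy

end Rec

end ItovProof
/-- A type with large cardinality and no pre-existing order instances. -/
def ItovProof.Big (P : Type u) : Type u := Set (Set P)

open ItovProof

/-- If a partial order `P` has property (itov) and its neighbourhood order contains no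
infinite strictly decreasing sequence, then `P` admits a total binary questionable
representation: words over `{0,1}` indexed by a well-order, with downward closed
supports, such that the strict order is given by the first difference (a question
`0` vs `1`) and incomparability corresponds exactly to one word being a prefix of
the other. -/
theorem itov_wf_neighbourhood_total_binary_questionable_representation
    (P : Type u) [PartialOrder P] (hitov : Itov P)
    (hwf : ¬∃ f : ℕ → P, ∀ n, NeighLT (f (n + 1)) (f n)) :
    ∃ (ι : Type u) (_ : LinearOrder ι) (_ : WellFoundedLT ι)
      (w : P → ι → Option Bool),
      Function.Injective w ∧
      (∀ x : P, ∀ i j : ι, j ≤ i → w x i ≠ none → w x j ≠ none) ∧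
      (∀ x y : P, x < y ↔
        ∃ i : ι, w x i = some false ∧ w y i = some true ∧ ∀ j < i, w x j = w y j) ∧
      (∀ x y : P, Incomp x y ↔
        (x ≠ y ∧ ∀ i : ι, ∀ a b : Bool, w x i = some a → w y i = some b → a = b)) := by

  classical
  have hex : ∀ S : Set P, ∃ d : Option P × Set P × Set P,
      (S.Nonempty → DS S d) ∧ d.2.1 ⊆ S ∧ d.2.2 ⊆ S := by
    intro S
    by_cases h : S.Nonempty
    · obtain ⟨d, hd⟩ := exists_dec hitov hwf S h
      exact ⟨d, fun _ => hd, hd.subA, hd.subB⟩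
    · exact ⟨(none, ∅, ∅), fun hn => absurd hn h, by simp, by simp⟩
  choose dec hdec hsubA hsubB using hex
  have hsub : ∀ S : Set P, (dec S).2.1 ⊆ S ∧ (dec S).2.2 ⊆ S := fun S => ⟨hsubA S, hsubB S⟩
  obtain ⟨lo, wfi⟩ := exists_wellOrder (Big P)
  have hcard : ∀ F : Big P → Set P, ¬ Function.Injective F := by
    intro F hF
    have h1 : Cardinal.mk (Big P) ≤ Cardinal.mk (Set P) := Cardinal.mk_le_of_injective hF
    have h2 : Cardinal.mk (Set P) < Cardinal.mk (Set (Set P)) := by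
      have h3 := Cardinal.cantor (Cardinal.mk (Set P))
      rwa [← Cardinal.mk_set] at h3
    have h4 : Cardinal.mk (Big P) = Cardinal.mk (Set (Set P)) := rfl
    rw [h4] at h1
    exact absurd h1 (not_le.mpr h2)
  refine ⟨Big P, lo, wfi, fun x i => valD dec (NodeD dec i x) x, ?_, ?_, ?_, ?_⟩
  · -- injectivity
    intro x y h
    by_contra hne
    obtain ⟨i, hi⟩ := exists_diff dec hdec hsub hcard hne
    exact hi (congrFun h i)
  · -- downward closed support
    intro x i j hji hni hj
    apply hni
    rcases eq_or_lt_of_le hji with he | hl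
    · rw [← he]; exact hj
    · obtain ⟨h1, h2⟩ := (valD_none_iff dec).mp hj
      have hch : childD dec (NodeD dec j x) x = ∅ := by
        unfold ItovProof.childD
        rw [if_neg h1, if_neg h2]
      have hNe : NodeD dec i x = ∅ :=
        Set.subset_empty_iff.mp (hch ▸ nodeD_subset_child dec hl x)
      show valD dec (NodeD dec i x) x = none
      rw [hNe, valD_empty dec hsub]
  · -- strict order iff first difference
    intro x y
    constructor
    · intro hlt
      obtain ⟨i, hpre, htri⟩ := atFirstDiff dec hdec hsub hcard (ne_of_lt hlt)
      rcases htri with ⟨h1, h2, _⟩ | ⟨_, _, h3⟩ | ⟨_, _, h3⟩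
      · exact ⟨i, h1, h2, hpre⟩
      · exact (lt_asymm hlt h3).elim
      · exact (h3.2.1 hlt.le).elim
    · rintro ⟨i, hxf, hyt, hpre⟩
      have hNi : NodeD dec i x = NodeD dec i y := nodeD_congr dec x y i hpre
      have hxA : x ∈ (dec (NodeD dec i x)).2.1 := (valD_false_iff dec).mp hxf
      have hyB : y ∈ (dec (NodeD dec i x)).2.2 := by
        rw [hNi]; exact ((valD_true_iff dec).mp hyt).2
      have hxS : x ∈ NodeD dec i x := (hsub _).1 hxA
      exact (hdec _ ⟨x, hxS⟩).lt_of x hxA y hyB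
  · -- incomparability iff compatibility
    intro x y
    constructor
    · intro hinc
      refine ⟨hinc.1, ?_⟩
      obtain ⟨i, hpre, htri⟩ := atFirstDiff dec hdec hsub hcard hinc.1
      rcases htri with ⟨_, _, h3⟩ | ⟨_, _, h3⟩ | ⟨hn, _, _⟩
      · exact (hinc.2.1 h3.le).elim
      · exact (hinc.2.2 h3.le).elim
      · intro k a b hka hkb
        have hka' : valD dec (NodeD dec k x) x = some a := hka
        have hkb' : valD dec (NodeD dec k y) y = some b := hkb
        rcases hn with hxn | hyn
        · rcases lt_trichotomy k i with h | h | h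
          · have h2 : (some a : Option Bool) = some b := by
              rw [← hka', ← hkb']; exact hpre k h
            exact Option.some.inj h2
          · rw [h, hxn] at hka'; cases hka'
          · obtain ⟨h1, h2⟩ := (valD_none_iff dec).mp hxn
            have hch : childD dec (NodeD dec i x) x = ∅ := by
              unfold ItovProof.childD
              rw [if_neg h1, if_neg h2]
            have hNe : NodeD dec k x = ∅ :=
              Set.subset_empty_iff.mp (hch ▸ nodeD_subset_child dec h x)
            rw [hNe, valD_empty dec hsub] at hka'; cases hka'
        · rcases lt_trichotomy k i with h | h | h
          · have h2 : (some a : Option Bool) = some b := by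
              rw [← hka', ← hkb']; exact hpre k h
            exact Option.some.inj h2
          · rw [h, hyn] at hkb'; cases hkb'
          · obtain ⟨h1, h2⟩ := (valD_none_iff dec).mp hyn
            have hch : childD dec (NodeD dec i y) y = ∅ := by
              unfold ItovProof.childD
              rw [if_neg h1, if_neg h2]
            have hNe : NodeD dec k y = ∅ :=
              Set.subset_empty_iff.mp (hch ▸ nodeD_subset_child dec h y)
            rw [hNe, valD_empty dec hsub] at hkb'; cases hkb'
    · rintro ⟨hne, hcomp⟩
      obtain ⟨i, hpre, htri⟩ := atFirstDiff dec hdec hsub hcard hne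
      rcases htri with ⟨h1, h2, _⟩ | ⟨h1, h2, _⟩ | ⟨_, _, h3⟩
      · exact absurd (hcomp i false true h1 h2) (by simp)
      · exact absurd (hcomp i true false h1 h2) (by simp)
      · exact h3
end

section
/- Let n ≥ 1, let Z = Zigzag_n, let S be any type, and let f : Z → S satisfy: for all x, y, z ∈ Z, if f x = f y and the order relation of z to x differs from the order relation of z to y (i.e., ¬((z < x ↔ z < y) ∧ (x < z ↔ y < z))), then f z = f x. If there exist distinct x, y ∈ Z with f x = f y, then f is constant. (This is the key lemma showing that no questionable representation of the zigzag order has width smaller than its number of elements.) -/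
/-- The underlying type of the zigzag poset `Zigzag n`: `Sum.inl i` is `s_i` and
`Sum.inr i` is `s'_i`, for `0 ≤ i ≤ n - 1`. -/
def Zigzag (n : ℕ) : Type := Fin n ⊕ Fin n

/-- The strict relation of the zigzag poset: `s_i < s'_i` and `s_i < s'_{i+1}`,
and nothing else. -/
def zigzagLT {n : ℕ} : Zigzag n → Zigzag n → Prop
  | Sum.inl i, Sum.inr j => (j : ℕ) = (i : ℕ) ∨ (j : ℕ) = (i : ℕ) + 1
  | _, _ => False

instance {n : ℕ} : PartialOrder (Zigzag n) where
  le a b := a = b ∨ zigzagLT a b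
  le_refl a := Or.inl rfl
  le_trans a b c hab hbc := by
    rcases hab with rfl | hab
    · exact hbc
    · rcases hbc with rfl | hbc
      · exact Or.inr hab
      · cases a <;> cases b <;> cases c <;> simp [zigzagLT] at hab hbc
  le_antisymm a b hab hba := by
    rcases hab with rfl | hab
    · rfl
    · rcases hba with rfl | hba
      · rfl
      · cases a <;> cases b <;> simp [zigzagLT] at hab hba

lemma zig_lt {n : ℕ} (a b : Zigzag n) : a < b ↔ zigzagLT a b := by
  rw [lt_iff_le_not_ge]
  show (a = b ∨ zigzagLT a b) ∧ ¬(b = a ∨ zigzagLT b a) ↔ _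
  constructor
  · rintro ⟨h1 | h1, h2⟩
    · exact absurd (Or.inl h1.symm) h2
    · exact h1
  · intro h
    refine ⟨Or.inr h, ?_⟩
    rintro (rfl | h2)
    · cases b <;> exact h.elim
    · cases a <;> cases b <;> simp [zigzagLT] at h h2 <;> omega

@[simp] lemma zigzagLT_inl_inr {n : ℕ} (i j : Fin n) :
    zigzagLT (Sum.inl i) (Sum.inr j) ↔ ((j : ℕ) = (i : ℕ) ∨ (j : ℕ) = (i : ℕ) + 1) := Iff.rfl

@[simp] lemma zigzagLT_inl_inl {n : ℕ} (i j : Fin n) :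
    zigzagLT (Sum.inl i) (Sum.inl j) ↔ False := Iff.rfl

@[simp] lemma zigzagLT_inr_inl {n : ℕ} (i j : Fin n) :
    zigzagLT (Sum.inr i) (Sum.inl j) ↔ False := Iff.rfl

@[simp] lemma zigzagLT_inr_inr {n : ℕ} (i j : Fin n) :
    zigzagLT (Sum.inr i) (Sum.inr j) ↔ False := Iff.rfl

/-- Key lemma for the width lower bound on questionable representations of zigzag
orders: let `n ≥ 1` and let `f` be a map on `Zigzag n` such that whenever
`f x = f y` and some `z` relates differently (with respect to `<`) to `x` than to
`y`, then `f z = f x`.  If `f` identifies two distinct elements, then `f` is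
constant. -/
theorem zigzag_identification_constant
    {n : ℕ} (hn : 1 ≤ n) {S : Type*} (f : Zigzag n → S)
    (hf : ∀ x y z : Zigzag n, f x = f y →
      ¬((z < x ↔ z < y) ∧ (x < z ↔ y < z)) → f z = f x)
    (hxy : ∃ x y : Zigzag n, x ≠ y ∧ f x = f y) :
    ∀ x y : Zigzag n, f x = f y := by
  obtain ⟨x, y, hne, hxyeq⟩ := hxy
  -- Step 1: there is an index k with f s_k = f s'_k
  obtain ⟨k, hk, hkk⟩ : ∃ (k : ℕ) (hk : k < n),
      f (Sum.inl (⟨k, hk⟩ : Fin n)) = f (Sum.inr (⟨k, hk⟩ : Fin n)) := by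
    -- helper: if f s_t = f y' and ¬ zigzagLT y' s'_t then f s'_t = f s_t
    have pull : ∀ (t : Fin n) (y' : Zigzag n), f (Sum.inl t) = f y' →
        ¬ zigzagLT y' (Sum.inr t) → f (Sum.inr t) = f (Sum.inl t) := by
      intro t y' he hy
      apply hf (Sum.inl t) y' (Sum.inr t) he
      rintro ⟨-, h2⟩
      apply hy
      exact (zig_lt _ _).1 (h2.1 ((zig_lt _ _).2 (Or.inl rfl)))
    -- helper: if f s'_t = f y' and ¬ zigzagLT s_t y' then f s_t = f s'_t
    have pull2 : ∀ (t : Fin n) (y' : Zigzag n), f (Sum.inr t) = f y' →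
        ¬ zigzagLT (Sum.inl t) y' → f (Sum.inl t) = f (Sum.inr t) := by
      intro t y' he hy
      apply hf (Sum.inr t) y' (Sum.inl t) he
      rintro ⟨h1, -⟩
      apply hy
      exact (zig_lt _ _).1 (h1.1 ((zig_lt _ _).2 (Or.inl rfl)))
    rcases x with i | i <;> rcases y with j | j
    · have hij : (i : ℕ) ≠ (j : ℕ) := by
        intro h; exact hne (congrArg _ (Fin.ext h))
      by_cases hc : (i : ℕ) = (j : ℕ) + 1
      · exact ⟨j, j.isLt, (pull j (Sum.inl i) hxyeq.symm
          (by simp only [zigzagLT_inl_inr, zigzagLT_inl_inl, zigzagLT_inr_inl, zigzagLT_inr_inr]; omega)).symm⟩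
      · exact ⟨i, i.isLt, (pull i (Sum.inl j) hxyeq
          (by simp only [zigzagLT_inl_inr, zigzagLT_inl_inl, zigzagLT_inr_inl, zigzagLT_inr_inr]; omega)).symm⟩
    · exact ⟨i, i.isLt, (pull i (Sum.inr j) hxyeq (by simp only [zigzagLT_inl_inr, zigzagLT_inl_inl, zigzagLT_inr_inl, zigzagLT_inr_inr]; exact not_false)).symm⟩
    · exact ⟨j, j.isLt, (pull j (Sum.inr i) hxyeq.symm (by simp only [zigzagLT_inl_inr, zigzagLT_inl_inl, zigzagLT_inr_inl, zigzagLT_inr_inr]; exact not_false)).symm⟩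
    · have hij : (i : ℕ) ≠ (j : ℕ) := by
        intro h; exact hne (congrArg _ (Fin.ext h))
      by_cases hc : (j : ℕ) = (i : ℕ) + 1
      · exact ⟨j, j.isLt, pull2 j (Sum.inr i) hxyeq.symm
          (by simp only [zigzagLT_inl_inr, zigzagLT_inl_inl, zigzagLT_inr_inl, zigzagLT_inr_inr]; omega)⟩
      · exact ⟨i, i.isLt, pull2 i (Sum.inr j) hxyeq
          (by simp only [zigzagLT_inl_inr, zigzagLT_inl_inl, zigzagLT_inr_inl, zigzagLT_inr_inr]; omega)⟩
  -- Step 2: propagation steps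
  have stepUp : ∀ (t : ℕ) (h1 : t + 1 < n),
      f (Sum.inl (⟨t, by omega⟩ : Fin n)) = f (Sum.inr (⟨t, by omega⟩ : Fin n)) →
      f (Sum.inl (⟨t + 1, h1⟩ : Fin n)) = f (Sum.inl (⟨t, by omega⟩ : Fin n)) ∧
      f (Sum.inr (⟨t + 1, h1⟩ : Fin n)) = f (Sum.inl (⟨t, by omega⟩ : Fin n)) := by
    intro t h1 he
    have h2 : f (Sum.inr (⟨t + 1, h1⟩ : Fin n)) = f (Sum.inl (⟨t, by omega⟩ : Fin n)) := by
      apply hf _ (Sum.inr (⟨t, by omega⟩ : Fin n)) _ he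
      exact fun h => (zig_lt _ _).1 (h.2.1 ((zig_lt _ _).2 (Or.inr rfl)))
    have h3 : f (Sum.inl (⟨t + 1, h1⟩ : Fin n)) = f (Sum.inl (⟨t, by omega⟩ : Fin n)) := by
      apply hf _ (Sum.inr (⟨t + 1, h1⟩ : Fin n)) _ h2.symm
      exact fun h => (zig_lt _ _).1 (h.1.2 ((zig_lt _ _).2 (Or.inl rfl)))
    exact ⟨h3, h2⟩
  have stepDown : ∀ (t : ℕ) (h1 : t + 1 < n),
      f (Sum.inl (⟨t + 1, h1⟩ : Fin n)) = f (Sum.inr (⟨t + 1, h1⟩ : Fin n)) →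
      f (Sum.inl (⟨t, by omega⟩ : Fin n)) = f (Sum.inl (⟨t + 1, h1⟩ : Fin n)) ∧
      f (Sum.inr (⟨t, by omega⟩ : Fin n)) = f (Sum.inl (⟨t + 1, h1⟩ : Fin n)) := by
    intro t h1 he
    have h2 : f (Sum.inl (⟨t, by omega⟩ : Fin n)) = f (Sum.inl (⟨t + 1, h1⟩ : Fin n)) := by
      apply hf _ (Sum.inr (⟨t + 1, h1⟩ : Fin n)) _ he
      exact fun h => (zig_lt _ _).1 (h.1.2 ((zig_lt _ _).2 (Or.inr rfl)))
    have h3 : f (Sum.inr (⟨t, by omega⟩ : Fin n)) = f (Sum.inl (⟨t, by omega⟩ : Fin n)) := by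
      apply hf _ (Sum.inl (⟨t + 1, h1⟩ : Fin n)) _ h2
      exact fun h => by rcases (zig_lt _ _).1 (h.2.1 ((zig_lt _ _).2 (Or.inl rfl))) with h' | h' <;> simp at h' <;> omega
    exact ⟨h2, h3.trans h2⟩
  -- Step 3: full propagation
  set C := f (Sum.inl (⟨k, hk⟩ : Fin n)) with hC
  have up : ∀ (m t : ℕ) (ht : t < n), k + m = t →
      f (Sum.inl (⟨t, ht⟩ : Fin n)) = C ∧ f (Sum.inr (⟨t, ht⟩ : Fin n)) = C := by
    intro m
    induction m with
    | zero =>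
      intro t ht h
      subst h
      exact ⟨rfl, hkk.symm⟩
    | succ m ih =>
      intro t ht h
      subst h
      have h' : k + m < n := by omega
      obtain ⟨ha, hb⟩ := ih (k + m) h' rfl
      obtain ⟨hc, hd⟩ := stepUp (k + m) ht (ha.trans hb.symm)
      exact ⟨hc.trans ha, hd.trans ha⟩
  have down : ∀ (m t : ℕ) (ht : t < n), t + m = k →
      f (Sum.inl (⟨t, ht⟩ : Fin n)) = C ∧ f (Sum.inr (⟨t, ht⟩ : Fin n)) = C := by
    intro m
    induction m with
    | zero =>
      intro t ht h
      have h' : t = k := by omega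
      subst h'
      exact ⟨rfl, hkk.symm⟩
    | succ m ih =>
      intro t ht h
      have h1 : t + 1 < n := by omega
      obtain ⟨ha, hb⟩ := ih (t + 1) h1 (by omega)
      obtain ⟨hc, hd⟩ := stepDown t h1 (ha.trans hb.symm)
      exact ⟨hc.trans ha, hd.trans ha⟩
  have total : ∀ z : Zigzag n, f z = C := by
    have key : ∀ (t : ℕ) (ht : t < n),
        f (Sum.inl (⟨t, ht⟩ : Fin n)) = C ∧ f (Sum.inr (⟨t, ht⟩ : Fin n)) = C := by
      intro t ht
      rcases le_or_gt k t with h | h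
      · exact up (t - k) t ht (by omega)
      · exact down (k - t) t ht (by omega)
    rintro (j | j)
    · exact (key j.val j.isLt).1
    · exact (key j.val j.isLt).2
  intro a b
  rw [total a, total b]
end
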